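/- Upper bound for the first eigenvalue of the complement of a small ball, n ≥ 3: let (M,g) be a compact Riemannian manifold (possibly with boundary), λ_0 the first eigenvalue of -Δ_g on M (with Dirichlet or Neumann condition at ∂M), φ_0 the associated normalized eigenfunction, and λ_ε the first eigenvalue of -Δ_g on M \ B_ε(p) with 0 Dirichlet condition on ∂B_ε(p). Then there exists c > 0 such that λ_ε - λ_0 ≤ c ε^{n-2} for all small ε > 0. -/

import Mathlib

/-!
Cut the first eigenfunction `φ₀` off linearly on the annulus `ε ≤ |x - p| ≤ 2ε`. The result is
admissible for the Rayleigh quotient of `M \ B_ε(p)` and agrees with `φ₀` outside `B_{2ε}(p)`,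
where its gradient is `O(1/ε)` and `φ₀` is bounded. So its Dirichlet energy exceeds `λ₀`, and its
`L²` mass falls short of `1`, by at most `O(ε⁻²) · vol B_{2ε}(p) = O(ε^{n-2})`.
-/

open MeasureTheory Metric Set
open scoped NNReal

section Cutoff

variable {X : Type*} [PseudoMetricSpace X] {p x : X} {ε : ℝ}

noncomputable def ballCutoff (p : X) (ε : ℝ) (x : X) : ℝ :=
  min 1 (max 0 (dist x p / ε - 1))

lemma abs_ballCutoff_le_one (p : X) (ε : ℝ) (x : X) : |ballCutoff p ε x| ≤ 1 :=
  abs_le.2 ⟨(neg_nonpos.2 zero_le_one).trans (le_min zero_le_one (le_max_left _ _)),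
    min_le_left _ _⟩

lemma ballCutoff_eq_zero (hε : 0 < ε) (hx : dist x p ≤ ε) : ballCutoff p ε x = 0 := by
  have h : dist x p / ε - 1 ≤ 0 := by rwa [sub_nonpos, div_le_one hε]
  simp [ballCutoff, max_eq_left h]

lemma ballCutoff_eq_one (hε : 0 < ε) (hx : 2 * ε ≤ dist x p) : ballCutoff p ε x = 1 := by
  have h : 1 ≤ dist x p / ε - 1 := by rw [le_sub_iff_add_le, le_div_iff₀ hε]; linarith
  simp [ballCutoff, max_eq_right (zero_le_one.trans h), min_eq_left h]

lemma lipschitzWith_ballCutoff (p : X) (hε : 0 < ε) :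
    LipschitzWith (Real.toNNReal ε⁻¹) (ballCutoff p ε) := by
  have h : LipschitzWith (Real.toNNReal ε⁻¹) fun x => dist x p / ε - 1 :=
    .of_dist_le' fun x y => by
      rw [Real.dist_eq, sub_sub_sub_cancel_right, ← sub_div, abs_div, abs_of_pos hε,
        div_eq_inv_mul]
      exact mul_le_mul_of_nonneg_left (abs_dist_sub_le x y p) (by positivity)
  exact (h.const_max 0).const_min 1

lemma LipschitzWith.mul_of_eq_one_off {f g : X → ℝ} {Lf Lg K : ℝ≥0} {s : Set X}
    (hg : LipschitzWith Lg g) (hf : LipschitzWith Lf f) (hg1 : ∀ x, |g x| ≤ 1)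
    (hfK : ∀ x ∈ s, |f x| ≤ K) (hgs : ∀ x ∉ s, g x = 1) :
    LipschitzWith (Lf + K * Lg) fun x => g x * f x := by
  have hmem : ∀ x y, y ∈ s → |g x * f x - g y * f y| ≤ (Lf + K * Lg) * dist x y := by
    intro x y hy
    have hfd := hf.dist_le_mul x y
    have hgd := hg.dist_le_mul x y
    rw [Real.dist_eq] at hfd hgd
    calc |g x * f x - g y * f y| = |g x * (f x - f y) + f y * (g x - g y)| := by ring_nf
      _ ≤ |g x| * |f x - f y| + |f y| * |g x - g y| := by
          rw [← abs_mul, ← abs_mul]; exact abs_add_le _ _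
      _ ≤ 1 * (Lf * dist x y) + K * (Lg * dist x y) := by
          gcongr
          exacts [hg1 x, hfK y hy]
      _ = (Lf + K * Lg) * dist x y := by ring
  refine .of_dist_le_mul fun x y => ?_
  rw [Real.dist_eq]
  by_cases hy : y ∈ s
  · exact hmem x y hy
  by_cases hx : x ∈ s
  · rw [abs_sub_comm, dist_comm]; exact hmem y x hx
  simp only [hgs x hx, hgs y hy, one_mul, ← Real.dist_eq]
  exact (hf.dist_le_mul x y).trans (by gcongr; exact le_self_add)

variable {φ : X → ℝ}

lemma eqOn_ballCutoff_mul (hε : 0 < ε) :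
    EqOn (fun x => ballCutoff p ε x * φ x) φ (closedBall p (2 * ε))ᶜ :=
  fun _ hx => by simp [ballCutoff_eq_one hε (lt_of_not_ge (mem_closedBall.not.1 hx)).le]

lemma lipschitzWith_ballCutoff_mul {L K : ℝ≥0} (hφ : LipschitzWith L φ)
    (hK : ∀ x ∈ closedBall p (2 * ε), |φ x| ≤ K) (hε : 0 < ε) :
    LipschitzWith (L + K * Real.toNNReal ε⁻¹) fun x => ballCutoff p ε x * φ x :=
  (lipschitzWith_ballCutoff p hε).mul_of_eq_one_off hφ (abs_ballCutoff_le_one p ε) hK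
    fun _ hx => ballCutoff_eq_one hε (lt_of_not_ge (mem_closedBall.not.1 hx)).le

end Cutoff

section Gradient

variable {E : Type*} [NormedAddCommGroup E] [InnerProductSpace ℝ E] [CompleteSpace E]
  {f g : E → ℝ}

lemma norm_gradient (f : E → ℝ) (x : E) : ‖gradient f x‖ = ‖fderiv ℝ f x‖ :=
  (InnerProductSpace.toDual ℝ E).symm.norm_map _

lemma norm_gradient_le_of_lipschitzWith {C : ℝ≥0} (hf : LipschitzWith C f) (x : E) :
    ‖gradient f x‖ ≤ C :=
  norm_gradient f x ▸ norm_fderiv_le_of_lipschitz ℝ hf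

lemma Set.EqOn.gradient_eqOn {s : Set E} (hfg : EqOn f g s) (hs : IsOpen s) :
    EqOn (gradient f) (gradient g) s :=
  fun _ hx => Filter.EventuallyEq.gradient_eq (Filter.eventually_of_mem (hs.mem_nhds hx) hfg)

lemma integrableOn_norm_gradient_sq [MeasurableSpace E] [OpensMeasurableSpace E]
    {μ : Measure E} {s : Set E} {C : ℝ≥0} (hf : LipschitzWith C f) (hs : μ s ≠ ⊤) :
    IntegrableOn (fun x => ‖gradient f x‖ ^ 2) s μ := by
  have hmeas : Measurable fun x => ‖gradient f x‖ ^ 2 := by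
    simpa only [norm_gradient] using ((measurable_fderiv ℝ f).norm.pow_const 2)
  refine Measure.integrableOn_of_bounded (M := C ^ 2) hs hmeas.aestronglyMeasurable
    (Filter.Eventually.of_forall fun x => ?_)
  rw [norm_pow, norm_norm]
  exact pow_le_pow_left₀ (norm_nonneg _) (norm_gradient_le_of_lipschitzWith hf x) 2

end Gradient

lemma setIntegral_le_setIntegral_add_of_eqOn_sdiff {α : Type*} [MeasurableSpace α]
    {μ : Measure α} {s t : Set α} {f g : α → ℝ} {C : ℝ} (hs : MeasurableSet s)
    (ht : MeasurableSet t) (hμt : μ t ≠ ⊤) (hf : IntegrableOn f s μ) (hg : IntegrableOn g s μ)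
    (hfg : EqOn f g (s \ t)) (hg0 : ∀ x ∈ s ∩ t, 0 ≤ g x) (hfC : ∀ x ∈ s ∩ t, f x ≤ C)
    (hC : 0 ≤ C) :
    ∫ x in s, f x ∂μ ≤ ∫ x in s, g x ∂μ + C * μ.real t := by
  have hμst : μ (s ∩ t) ≠ ⊤ := ne_top_of_le_ne_top hμt (measure_mono inter_subset_right)
  have hf_st : ∫ x in s ∩ t, f x ∂μ ≤ C * μ.real (s ∩ t) :=
    calc ∫ x in s ∩ t, f x ∂μ ≤ ∫ _ in s ∩ t, C ∂μ :=
          setIntegral_mono_on (hf.mono_set inter_subset_left) (integrableOn_const hμst)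
            (hs.inter ht) hfC
      _ = C * μ.real (s ∩ t) := by rw [setIntegral_const, smul_eq_mul, mul_comm]
  have hg_st : 0 ≤ ∫ x in s ∩ t, g x ∂μ := setIntegral_nonneg (hs.inter ht) hg0
  have hμ_le : μ.real (s ∩ t) ≤ μ.real t := measureReal_mono inter_subset_right hμt
  rw [← integral_inter_add_sdiff ht hf, ← integral_inter_add_sdiff ht hg,
    setIntegral_congr_fun (hs.diff ht) hfg]
  nlinarith [mul_le_mul_of_nonneg_left hμ_le hC]

lemma sq_add_div_mul_pow_le {a b ε : ℝ} {n : ℕ} (ha : 0 ≤ a) (hb : 0 ≤ b) (hε : 0 < ε)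
    (hε1 : ε ≤ 1) (hn : 2 ≤ n) :
    (a + b / ε) ^ 2 * ε ^ n ≤ (a + b) ^ 2 * ε ^ (n - 2) := by
  obtain ⟨m, rfl⟩ : ∃ m, n = m + 2 := ⟨n - 2, by omega⟩
  have h : (a + b / ε) ^ 2 * ε ^ 2 = (a * ε + b) ^ 2 := by field_simp
  rw [Nat.add_sub_cancel, pow_add, ← mul_assoc, mul_comm _ (ε ^ m), mul_assoc, h, mul_comm]
  gcongr
  nlinarith

section MetricSpace

variable {X : Type*} [MetricSpace X] [ProperSpace X] [MeasurableSpace X] [OpensMeasurableSpace X]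
  {μ : Measure X} [IsFiniteMeasureOnCompacts μ] {M : Set X} {φ : X → ℝ} {p : X} {ε : ℝ}
  {K : ℝ≥0}

lemma setIntegral_sq_le_setIntegral_ballCutoff_mul_sq_add (hM : IsCompact M)
    (hφ : Continuous φ) (hK : ∀ x ∈ M, |φ x| ≤ K) (hε : 0 < ε) :
    ∫ x in M, φ x ^ 2 ∂μ ≤
      ∫ x in M, (ballCutoff p ε x * φ x) ^ 2 ∂μ + K ^ 2 * μ.real (closedBall p (2 * ε)) := by
  have hu : Continuous fun x => ballCutoff p ε x * φ x :=
    (lipschitzWith_ballCutoff p hε).continuous.mul hφ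
  refine setIntegral_le_setIntegral_add_of_eqOn_sdiff hM.measurableSet measurableSet_closedBall
    measure_closedBall_lt_top.ne ((hφ.pow 2).continuousOn.integrableOn_compact hM)
    ((hu.pow 2).continuousOn.integrableOn_compact hM) (fun x hx => ?_) (fun _ _ => by positivity)
    (fun x hx => ?_) (by positivity)
  · simp only [eqOn_ballCutoff_mul hε hx.2]
  · rw [← sq_abs]
    gcongr
    exact hK x hx.1

end MetricSpace

section InnerProductSpace

variable {E : Type*} [NormedAddCommGroup E] [InnerProductSpace ℝ E] [ProperSpace E]
  [MeasurableSpace E] [OpensMeasurableSpace E] {μ : Measure E} [IsFiniteMeasureOnCompacts μ]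
  {M : Set E} {φ : E → ℝ} {p : E} {ε : ℝ} {L K : ℝ≥0}

lemma setIntegral_norm_gradient_ballCutoff_mul_le (hM : IsCompact M) (hφ : LipschitzWith L φ)
    (hK : ∀ x ∈ closedBall p (2 * ε), |φ x| ≤ K) (hε : 0 < ε) :
    ∫ x in M, ‖gradient (fun y => ballCutoff p ε y * φ y) x‖ ^ 2 ∂μ ≤
      ∫ x in M, ‖gradient φ x‖ ^ 2 ∂μ + (L + K / ε) ^ 2 * μ.real (closedBall p (2 * ε)) := by
  have hu := lipschitzWith_ballCutoff_mul hφ hK hε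
  have hLu : ((L + K * Real.toNNReal ε⁻¹ : ℝ≥0) : ℝ) = L + K / ε := by
    push_cast [Real.coe_toNNReal _ (inv_nonneg.2 hε.le)]
    ring
  have hgrad : EqOn (gradient fun y => ballCutoff p ε y * φ y) (gradient φ)
      (closedBall p (2 * ε))ᶜ :=
    (eqOn_ballCutoff_mul hε).gradient_eqOn isClosed_closedBall.isOpen_compl
  refine setIntegral_le_setIntegral_add_of_eqOn_sdiff hM.measurableSet measurableSet_closedBall
    measure_closedBall_lt_top.ne (integrableOn_norm_gradient_sq hu hM.measure_lt_top.ne)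
    (integrableOn_norm_gradient_sq hφ hM.measure_lt_top.ne) (fun x hx => ?_)
    (fun _ _ => by positivity) (fun x _ => ?_) (by positivity)
  · simp only [hgrad hx.2]
  · rw [← hLu]
    gcongr
    exact norm_gradient_le_of_lipschitzWith hu x

theorem exists_admissible_ballCutoff {A : ℝ} {n : ℕ} (hM : IsCompact M) (hφ : LipschitzWith L φ)
    (hK : ∀ x ∈ M, |φ x| ≤ K) (hn : 2 ≤ n) (hε : 0 < ε) (hε1 : ε ≤ 1)
    (hB : closedBall p (2 * ε) ⊆ interior M) (hμB : μ.real (closedBall p (2 * ε)) ≤ A * ε ^ n) :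
    ∃ u : E → ℝ, (∃ L' : ℝ≥0, LipschitzWith L' u) ∧ (∀ x ∈ closedBall p ε, u x = 0) ∧
      (∀ x ∈ frontier M, u x = φ x) ∧
      ∫ x in M, ‖gradient u x‖ ^ 2 ∂μ ≤
        ∫ x in M, ‖gradient φ x‖ ^ 2 ∂μ + A * (L + K) ^ 2 * ε ^ (n - 2) ∧
      ∫ x in M, φ x ^ 2 ∂μ ≤ ∫ x in M, u x ^ 2 ∂μ + A * K ^ 2 * ε ^ (n - 2) := by
  have hKB : ∀ x ∈ closedBall p (2 * ε), |φ x| ≤ K := fun x hx => hK x (interior_subset (hB hx))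
  have hA : 0 ≤ A := nonneg_of_mul_nonneg_left (measureReal_nonneg.trans hμB) (by positivity)
  have hμB' {c : ℝ} (hc : 0 ≤ c) := mul_le_mul_of_nonneg_left hμB hc
  refine ⟨fun x => ballCutoff p ε x * φ x, ⟨_, lipschitzWith_ballCutoff_mul hφ hKB hε⟩,
    fun x hx => by simp [ballCutoff_eq_zero hε hx],
    fun x hx => eqOn_ballCutoff_mul hε fun hxB => hx.2 (hB hxB), ?_, ?_⟩
  · have hgain := sq_add_div_mul_pow_le L.coe_nonneg K.coe_nonneg hε hε1 hn
    nlinarith [setIntegral_norm_gradient_ballCutoff_mul_le (μ := μ) hM hφ hKB hε,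
      hμB' (sq_nonneg (L + K / ε : ℝ)), mul_le_mul_of_nonneg_left hgain hA]
  · have hpow : ε ^ n ≤ ε ^ (n - 2) := pow_le_pow_of_le_one hε.le hε1 (Nat.sub_le n 2)
    nlinarith [setIntegral_sq_le_setIntegral_ballCutoff_mul_sq_add (μ := μ) (p := p) hM
      hφ.continuous hK hε, hμB' (sq_nonneg (K : ℝ)),
      mul_le_mul_of_nonneg_left hpow (mul_nonneg hA (sq_nonneg (K : ℝ)))]

end InnerProductSpace

lemma sub_le_of_mul_le_of_one_le_add {lam lam₀ Q a b δ : ℝ} (hlam₀ : 0 ≤ lam₀) (ha : 0 ≤ a)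
    (hb : 0 ≤ b) (hδ : 0 ≤ δ) (hbδ : 2 * b * δ ≤ 1) (hQ : 1 ≤ Q + b * δ)
    (h : lam * Q ≤ lam₀ + a * δ) :
    lam - lam₀ ≤ (2 * a + 2 * b * lam₀) * δ := by
  have hc : 0 ≤ (2 * a + 2 * b * lam₀) * δ := by positivity
  rcases le_or_gt lam 0 with hlam | hlam
  · linarith
  have hmass : lam * (1 - b * δ) ≤ lam * Q := by gcongr; linarith
  have hlam_le : lam ≤ 2 * (lam₀ + a * δ) := by nlinarith
  nlinarith [mul_le_mul_of_nonneg_right hlam_le (mul_nonneg hb hδ),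
    mul_le_mul_of_nonneg_left hbδ (mul_nonneg ha hδ)]

theorem eigenvalue_complement_small_ball_upper_bound_general (n : ℕ) (hn : 3 ≤ n)
    (M : Set (EuclideanSpace ℝ (Fin n))) (hMcomp : IsCompact M)
    (p : EuclideanSpace ℝ (Fin n)) (hp : p ∈ interior M)
    (φ₀ : EuclideanSpace ℝ (Fin n) → ℝ) (lam₀ : ℝ)
    (L : NNReal) (hLip : LipschitzWith L φ₀)
    (hnorm : ∫ x in M, (φ₀ x) ^ 2 = 1)
    (henergy : ∫ x in M, ‖gradient φ₀ x‖ ^ 2 = lam₀)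
    (lamE : ℝ → ℝ)
    (hvar : ∀ ε > (0 : ℝ), ∀ u : EuclideanSpace ℝ (Fin n) → ℝ,
      (∃ L' : NNReal, LipschitzWith L' u) →
      (∀ x ∈ Metric.closedBall p ε, u x = 0) →
      (∀ x ∈ frontier M, u x = φ₀ x) →
      0 < ∫ x in M, (u x) ^ 2 →
      lamE ε * ∫ x in M, (u x) ^ 2 ≤ ∫ x in M, ‖gradient u x‖ ^ 2) :
    ∃ c > (0 : ℝ), ∃ ε₀ > (0 : ℝ), ∀ ε : ℝ, 0 < ε → ε < ε₀ →
      lamE ε - lam₀ ≤ c * ε ^ (n - 2) := by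
  obtain ⟨r, hr, hball⟩ := isOpen_iff.1 isOpen_interior p hp
  obtain ⟨K, hK⟩ : ∃ K : ℝ≥0, ∀ x ∈ M, |φ₀ x| ≤ K := by
    obtain ⟨C, hC⟩ := hMcomp.exists_bound_of_continuousOn hLip.continuous.continuousOn
    exact ⟨C.toNNReal, fun x hx => (hC x hx).trans (Real.le_coe_toNNReal C)⟩
  obtain ⟨A, hA, hvol⟩ : ∃ A : ℝ, 0 ≤ A ∧
      ∀ ε, 0 ≤ ε → volume.real (closedBall p (2 * ε)) = A * ε ^ n := by
    refine ⟨2 ^ n * volume.real (closedBall (0 : EuclideanSpace ℝ (Fin n)) 1), by positivity,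
      fun ε hε => ?_⟩
    rw [Measure.addHaar_real_closedBall' _ _ (by positivity), finrank_euclideanSpace_fin, mul_pow]
    ring
  have hlam₀ : 0 ≤ lam₀ :=
    henergy ▸ setIntegral_nonneg hMcomp.measurableSet fun _ _ => by positivity
  refine ⟨2 * (A * (L + K) ^ 2) + 2 * (A * K ^ 2) * lam₀ + 1, by positivity,
    min (r / 2) (1 / (2 * (A * K ^ 2) + 1)), by positivity, fun ε hε hεε₀ => ?_⟩
  have hεr : 2 * ε < r := by linarith [min_le_left (r / 2) (1 / (2 * (A * K ^ 2) + 1))]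
  have hεb : ε * (2 * (A * K ^ 2) + 1) < 1 := by
    have h := hεε₀.trans_le (min_le_right _ _)
    rwa [lt_div_iff₀ (by positivity)] at h
  have hAK : 0 ≤ A * K ^ 2 := by positivity
  have hε1 : ε ≤ 1 := by nlinarith
  have hδ : ε ^ (n - 2) ≤ ε := pow_le_of_le_one hε.le hε1 (by omega)
  have hbδ : 2 * (A * K ^ 2) * ε ^ (n - 2) ≤ 1 := by nlinarith
  obtain ⟨u, hu, hu₀, huφ, henergy_u, hmass⟩ := exists_admissible_ballCutoff hMcomp hLip hK
    (by omega) hε hε1 ((closedBall_subset_ball hεr).trans hball) (hvol ε hε.le).le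
  rw [henergy] at henergy_u
  rw [hnorm] at hmass
  refine (sub_le_of_mul_le_of_one_le_add hlam₀ (by positivity) hAK (by positivity) hbδ
    (by linarith) ((hvar ε hε u hu hu₀ huφ (by nlinarith)).trans henergy_u)).trans ?_
  gcongr ?_ * _
  linarith

/-- upper bound for the first eigenvalue of the complement of a small ball,
`n ≥ 3`, stated for a compact Euclidean domain `M`.  Let `φ₀` be the normalized first
eigenfunction with eigenvalue `λ₀ = ∫ |∇φ₀|²`, and let `lamE ε` (the first eigenvalue of
`-Δ` on `M \ B_ε(p)` with zero Dirichlet condition on `∂B_ε(p)` and the same condition as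
`φ₀` at `∂M`) satisfy its variational characterization as an infimum of Rayleigh quotients.
Then there is `c > 0` with `lamE ε - λ₀ ≤ c ε^{n-2}` for all small `ε > 0`. -/
theorem eigenvalue_complement_small_ball_upper_bound (n : ℕ) (hn : 3 ≤ n)
    (M : Set (EuclideanSpace ℝ (Fin n))) (hMmeas : MeasurableSet M) (hMcomp : IsCompact M)
    (p : EuclideanSpace ℝ (Fin n)) (hp : p ∈ interior M)
    (φ₀ : EuclideanSpace ℝ (Fin n) → ℝ) (lam₀ : ℝ)
    (L : NNReal) (hLip : LipschitzWith L φ₀)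
    (K : ℝ) (hK : ∀ x ∈ M, |φ₀ x| ≤ K)
    (hnorm : ∫ x in M, (φ₀ x) ^ 2 = 1)
    (henergy : ∫ x in M, ‖gradient φ₀ x‖ ^ 2 = lam₀)
    (lamE : ℝ → ℝ)
    (hvar : ∀ ε > (0 : ℝ), ∀ u : EuclideanSpace ℝ (Fin n) → ℝ,
      (∃ L' : NNReal, LipschitzWith L' u) →
      (∀ x ∈ Metric.closedBall p ε, u x = 0) →
      (∀ x ∈ frontier M, u x = φ₀ x) →
      0 < ∫ x in M, (u x) ^ 2 →
      lamE ε * ∫ x in M, (u x) ^ 2 ≤ ∫ x in M, ‖gradient u x‖ ^ 2) :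
    ∃ c > (0 : ℝ), ∃ ε₀ > (0 : ℝ), ∀ ε : ℝ, 0 < ε → ε < ε₀ →
      lamE ε - lam₀ ≤ c * ε ^ (n - 2) :=
  eigenvalue_complement_small_ball_upper_bound_general n hn M hMcomp p hp φ₀ lam₀ L hLip hnorm
    henergy lamE hvar
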